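/- Let ρ* be any probability measure on ℝ^d, let h > 0, and let ρ*_h be the density of ρ* * N(0, h I_d) with score s*_h = ∇ log ρ*_h. Then for every x ∈ ℝ^d, ‖s*_h(x)‖² ≤ (2/h) log( 1 / ((2πh)^{d/2} ρ*_h(x)) ). -/

import Mathlib

/-! Write `g_u` for the Gaussian kernel centred at `u`, `ρ = ρ*_h` and `s = s*_h(x)`.
Differentiating under the integral, `ρ(x) s = ∫ (g_u(x) / h) (u - x) dμ(u)`, so the weights
`g_u(x) dμ(u)` have first moment `∫ ⟪u - x, s⟫ g_u(x) dμ(u) = h ‖s‖² ρ(x)`. Tilting them by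
`exp ⟪u - x, s⟫` moves every kernel to the point `x + h s`, up to the factor `exp (h ‖s‖² / 2)`,
so the tilted mass is at most `exp (h ‖s‖² / 2) (2πh)^{-d/2}`; by Jensen it is at least
`exp (h ‖s‖²) ρ(x)`. Hence `exp (h ‖s‖² / 2) ρ(x) ≤ (2πh)^{-d/2}`; take logarithms. -/

open MeasureTheory Real
open scoped RealInnerProductSpace ENNReal

noncomputable section

abbrev Vec (d : ℕ) := EuclideanSpace ℝ (Fin d)

/-- Density at `x` of the Gaussian `N(c, h I_d)` on `ℝ^d`. -/
def gaussD (d : ℕ) (h : ℝ) (c x : Vec d) : ℝ :=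
  (2 * π * h) ^ (-(d : ℝ) / 2) * Real.exp (-‖x - c‖ ^ 2 / (2 * h))

/-- Density of `μ * N(0, h I_d)` for a measure `μ`. -/
def convD (d : ℕ) (μ : Measure (Vec d)) (h : ℝ) (x : Vec d) : ℝ :=
  ∫ u, gaussD d h u x ∂μ

/-- Density of `p * N(0, h I_d)` for a density function `p`. -/
def densConvD (d : ℕ) (p : Vec d → ℝ) (h : ℝ) (y : Vec d) : ℝ :=
  ∫ z, p (y - z) * gaussD d h 0 z

/-- Density of the Gaussian mixture `(1/n) ∑ᵢ N(Xᵢ, h I_d)`. -/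
def mixD (d n : ℕ) (X : Fin n → Vec d) (h : ℝ) (x : Vec d) : ℝ :=
  (n : ℝ)⁻¹ * ∑ i, gaussD d h (X i) x

/-- Score function `∇ log f`. -/
def scoreFn (d : ℕ) (f : Vec d → ℝ) (x : Vec d) : Vec d :=
  gradient (fun y => Real.log (f y)) x

/-- Regularized score `∇f / max(f, ε)`. -/
def regScore (d : ℕ) (f : Vec d → ℝ) (ε : ℝ) (x : Vec d) : Vec d :=
  (max (f x) ε)⁻¹ • gradient f x

/-- Score matching loss `∫ ‖s₁ - s₂‖² f`. -/
def scoreLoss (d : ℕ) (s₁ s₂ : Vec d → Vec d) (f : Vec d → ℝ) : ℝ :=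
  ∫ x, ‖s₁ x - s₂ x‖ ^ 2 * f x

/-- Squared Hellinger distance between densities. -/
def hellSq (d : ℕ) (p q : Vec d → ℝ) : ℝ :=
  ∫ x, (Real.sqrt (p x) - Real.sqrt (q x)) ^ 2

/-- Mean vector of a measure. -/
def meanVec (d : ℕ) (μ : Measure (Vec d)) : Vec d :=
  ∫ y, y ∂μ

/-- `μ` is `α`-subgaussian: `E[exp⟨θ, X - E X⟩] ≤ exp(α²‖θ‖²/2)` for all `θ`. -/
def IsSubgaussianMeasure (d : ℕ) (μ : Measure (Vec d)) (α : ℝ) : Prop :=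
  ∀ θ : Vec d, ∫ x, Real.exp ⟪θ, x - meanVec d μ⟫ ∂μ ≤ Real.exp (α ^ 2 * ‖θ‖ ^ 2 / 2)

/-- Quadratic form of the Hessian of `g` at `x` applied to `v`. -/
def hessQ (d : ℕ) (g : Vec d → ℝ) (x v : Vec d) : ℝ :=
  iteratedFDeriv ℝ 2 g x ![v, v]

/-- Jensen's inequality for `exp` under the unnormalised weights `w dμ`. -/
lemma exp_mul_integral_le_integral_mul_exp {α : Type*} [MeasurableSpace α] {μ : Measure α}
    {w φ : α → ℝ} {b : ℝ} (hw : 0 ≤ w) (hwi : Integrable w μ)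
    (hwφ : Integrable (fun a => w a * φ a) μ) (hwexp : Integrable (fun a => w a * exp (φ a)) μ)
    (hb : ∫ a, w a * φ a ∂μ = b * ∫ a, w a ∂μ) :
    exp b * ∫ a, w a ∂μ ≤ ∫ a, w a * exp (φ a) ∂μ := by
  have htangent : ∀ a, exp b * ((1 - b) * w a + w a * φ a) ≤ w a * exp (φ a) := fun a => by
    calc exp b * ((1 - b) * w a + w a * φ a) = w a * (exp b * (φ a - b + 1)) := by ring
      _ ≤ w a * (exp b * exp (φ a - b)) := by gcongr; exacts [hw a, add_one_le_exp _]
      _ = w a * exp (φ a) := by rw [← exp_add, add_sub_cancel]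
  calc exp b * ∫ a, w a ∂μ
      = ∫ a, exp b * ((1 - b) * w a + w a * φ a) ∂μ := by
        rw [integral_const_mul, integral_add (hwi.const_mul _) hwφ, integral_const_mul, hb]
        ring
    _ ≤ ∫ a, w a * exp (φ a) ∂μ :=
        integral_mono ((hwi.const_mul _).add hwφ |>.const_mul _) hwexp htangent

lemma mul_exp_neg_sq_div_le_sqrt {h : ℝ} (hh : 0 < h) (r : ℝ) :
    r * exp (-r ^ 2 / (2 * h)) ≤ √h := by
  obtain ⟨s, hs, rfl⟩ : ∃ s, 0 < s ∧ h = s ^ 2 := ⟨√h, sqrt_pos.2 hh, (sq_sqrt hh.le).symm⟩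
  rw [sqrt_sq hs.le]
  -- `r ≤ s (1 + r² / (2s²))` is AM-GM, then `1 + t ≤ exp t`.
  have hamgm : r ≤ s * (1 + r ^ 2 / (2 * s ^ 2)) := by
    rw [show s * (1 + r ^ 2 / (2 * s ^ 2)) = (2 * s ^ 2 + r ^ 2) / (2 * s) by field_simp,
      le_div_iff₀ (by positivity)]
    nlinarith [sq_nonneg (s - r)]
  calc r * exp (-r ^ 2 / (2 * s ^ 2))
      ≤ s * exp (r ^ 2 / (2 * s ^ 2)) * exp (-r ^ 2 / (2 * s ^ 2)) := by
        gcongr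
        exact hamgm.trans (by gcongr; linarith [add_one_le_exp (r ^ 2 / (2 * s ^ 2))])
    _ = s := by rw [mul_assoc, ← exp_add, neg_div, add_neg_cancel, exp_zero, mul_one]

lemma le_two_div_mul_log_of_exp_mul_le {h t ρ K : ℝ} (hh : 0 < h) (hρ : 0 < ρ) (hK : 0 < K)
    (H : exp (h * t / 2) * ρ ≤ K⁻¹) : t ≤ 2 / h * log (1 / (K * ρ)) := by
  have hexp : exp (h * t / 2) ≤ 1 / (K * ρ) := by
    rw [le_div_iff₀ (by positivity)]
    calc exp (h * t / 2) * (K * ρ) = (exp (h * t / 2) * ρ) * K := by ring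
      _ ≤ K⁻¹ * K := by gcongr
      _ = 1 := inv_mul_cancel₀ hK.ne'
  have hlog := log_le_log (exp_pos _) hexp
  rw [log_exp] at hlog
  calc t = 2 / h * (h * t / 2) := by field_simp
    _ ≤ 2 / h * log (1 / (K * ρ)) := by gcongr

section Gaussian

variable {d : ℕ} {h : ℝ}

lemma gaussD_pos (hh : 0 < h) (c x : Vec d) : 0 < gaussD d h c x := by
  unfold gaussD; positivity

lemma gaussD_nonneg (hh : 0 ≤ h) (c x : Vec d) : 0 ≤ gaussD d h c x := by
  unfold gaussD; positivity

lemma gaussD_le (hh : 0 ≤ h) (c x : Vec d) : gaussD d h c x ≤ (2 * π * h) ^ (-(d : ℝ) / 2) := by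
  unfold gaussD
  refine mul_le_of_le_one_right (by positivity) (exp_le_one_iff.2 ?_)
  exact div_nonpos_of_nonpos_of_nonneg (neg_nonpos.2 (by positivity)) (by positivity)

lemma continuous_gaussD_center (x : Vec d) : Continuous fun u : Vec d => gaussD d h u x := by
  unfold gaussD; fun_prop

lemma norm_gaussD_div_smul_sub_le (hh : 0 < h) (u x : Vec d) :
    ‖(gaussD d h u x / h) • (u - x)‖ ≤ (2 * π * h) ^ (-(d : ℝ) / 2) / √h := by
  have hr := mul_exp_neg_sq_div_le_sqrt hh ‖x - u‖
  have hsqrt : 0 < √h := sqrt_pos.2 hh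
  rw [norm_smul, norm_div, Real.norm_of_nonneg (gaussD_pos hh u x).le, Real.norm_of_nonneg hh.le,
    norm_sub_rev, le_div_iff₀ hsqrt]
  calc gaussD d h u x / h * ‖x - u‖ * √h
      = (2 * π * h) ^ (-(d : ℝ) / 2) * (‖x - u‖ * exp (-‖x - u‖ ^ 2 / (2 * h))) / √h := by
        unfold gaussD
        field_simp
        rw [sq_sqrt hh.le]
        ring
    _ ≤ (2 * π * h) ^ (-(d : ℝ) / 2) * √h / √h := by gcongr
    _ = (2 * π * h) ^ (-(d : ℝ) / 2) := mul_div_cancel_right₀ _ hsqrt.ne'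

lemma hasFDerivAt_gaussD (u x : Vec d) :
    HasFDerivAt (gaussD d h u) (innerSL ℝ ((gaussD d h u x / h) • (u - x))) x := by
  have hfun : gaussD d h u =
      fun y => (2 * π * h) ^ (-(d : ℝ) / 2) * exp (-(2 * h)⁻¹ * ‖y - u‖ ^ 2) := by
    funext y; simp only [gaussD]; ring_nf
  rw [hfun]
  refine ((((hasFDerivAt_id x).sub_const u).norm_sq.const_mul (-(2 * h)⁻¹)).exp.const_mul
    ((2 * π * h) ^ (-(d : ℝ) / 2))).congr_fderiv ?_
  ext v
  simp only [id, innerSL_apply_apply, smul_apply, ContinuousLinearMap.comp_apply,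
    smul_eq_mul, real_inner_smul_left, ContinuousLinearMap.id_apply, nsmul_eq_mul]
  rw [← neg_sub u x, inner_neg_left, norm_neg]
  field_simp
  push_cast
  ring

lemma gaussD_mul_inner_sub (hh : h ≠ 0) (u x v : Vec d) :
    gaussD d h u x * ⟪u - x, v⟫ = h * ⟪v, (gaussD d h u x / h) • (u - x)⟫ := by
  rw [real_inner_smul_right, real_inner_comm]
  field_simp

lemma gaussD_mul_exp_inner (hh : h ≠ 0) (u x v : Vec d) :
    gaussD d h u x * exp ⟪u - x, v⟫ = gaussD d h u (x + h • v) * exp (h * ‖v‖ ^ 2 / 2) := by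
  have hnorm : ‖x + h • v - u‖ ^ 2 = ‖x - u‖ ^ 2 - 2 * h * ⟪u - x, v⟫ + h ^ 2 * ‖v‖ ^ 2 := by
    rw [show x + h • v - u = (x - u) + h • v by abel, norm_add_sq_real, inner_smul_right,
      norm_smul, mul_pow, Real.norm_eq_abs, sq_abs, ← neg_sub u x, inner_neg_left]
    ring
  simp only [gaussD, hnorm, mul_assoc, ← exp_add]
  congr 2
  field_simp
  ring

end Gaussian

section Convolution

variable {d : ℕ} {h : ℝ} {μ : Measure (Vec d)}

lemma integrable_gaussD [IsFiniteMeasure μ] (hh : 0 ≤ h) (x : Vec d) :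
    Integrable (fun u => gaussD d h u x) μ :=
  .of_bound (continuous_gaussD_center x).aestronglyMeasurable _ <| .of_forall fun u => by
    rw [Real.norm_of_nonneg (gaussD_nonneg hh u x)]
    exact gaussD_le hh u x

lemma integrable_gaussD_div_smul_sub [IsFiniteMeasure μ] (hh : 0 < h) (x : Vec d) :
    Integrable (fun u => (gaussD d h u x / h) • (u - x)) μ :=
  .of_bound ((continuous_gaussD_center x).div_const h |>.smul
    (continuous_id.sub continuous_const)).aestronglyMeasurable _ <|
    .of_forall fun u => norm_gaussD_div_smul_sub_le hh u x

lemma convD_pos [IsFiniteMeasure μ] [NeZero μ] (hh : 0 < h) (x : Vec d) : 0 < convD d μ h x := by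
  rw [convD, integral_pos_iff_support_of_nonneg (fun u => (gaussD_pos hh u x).le)
    (integrable_gaussD hh.le x), Function.support_eq_univ fun u => (gaussD_pos hh u x).ne']
  exact Measure.measure_univ_pos.2 (NeZero.ne μ)

lemma convD_le [IsProbabilityMeasure μ] (hh : 0 ≤ h) (x : Vec d) :
    convD d μ h x ≤ (2 * π * h) ^ (-(d : ℝ) / 2) := by
  calc convD d μ h x ≤ ∫ _, (2 * π * h) ^ (-(d : ℝ) / 2) ∂μ :=
        integral_mono (integrable_gaussD hh x) (integrable_const _) fun u => gaussD_le hh u x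
    _ = (2 * π * h) ^ (-(d : ℝ) / 2) := by simp

lemma hasGradientAt_convD [IsFiniteMeasure μ] (hh : 0 < h) (x : Vec d) :
    HasGradientAt (convD d μ h) (∫ u, (gaussD d h u x / h) • (u - x) ∂μ) x := by
  rw [hasGradientAt_iff_hasFDerivAt]
  have hderiv := hasFDerivAt_integral_of_dominated_of_fderiv_le (μ := μ) (s := Set.univ)
    (F := fun y u => gaussD d h u y)
    (F' := fun y u => innerSL ℝ ((gaussD d h u y / h) • (u - y)))
    (bound := fun _ => (2 * π * h) ^ (-(d : ℝ) / 2) / √h) Filter.univ_mem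
    (.of_forall fun y => (continuous_gaussD_center y).aestronglyMeasurable)
    (integrable_gaussD hh.le x)
    ((innerSL ℝ).continuous.comp_aestronglyMeasurable
      (integrable_gaussD_div_smul_sub hh x).aestronglyMeasurable)
    (.of_forall fun u y _ => by
      rw [innerSL_apply_norm]; exact norm_gaussD_div_smul_sub_le hh u y)
    (integrable_const _)
    (.of_forall fun u y _ => hasFDerivAt_gaussD u y)
  rwa [(innerSL ℝ).integral_comp_comm (integrable_gaussD_div_smul_sub hh x)] at hderiv

lemma scoreFn_convD [IsFiniteMeasure μ] [NeZero μ] (hh : 0 < h) (x : Vec d) :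
    scoreFn d (convD d μ h) x = (convD d μ h x)⁻¹ • ∫ u, (gaussD d h u x / h) • (u - x) ∂μ := by
  refine HasGradientAt.gradient (hasGradientAt_iff_hasFDerivAt.2 ?_)
  refine ((hasGradientAt_iff_hasFDerivAt.1 (hasGradientAt_convD (μ := μ) hh x)).log
    (convD_pos hh x).ne').congr_fderiv ?_
  ext v
  simp

lemma integrable_gaussD_mul_inner [IsFiniteMeasure μ] (hh : 0 < h) (x v : Vec d) :
    Integrable (fun u => gaussD d h u x * ⟪u - x, v⟫) μ := by
  simp_rw [gaussD_mul_inner_sub hh.ne']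
  exact ((integrable_gaussD_div_smul_sub hh x).const_inner v).const_mul h

lemma integral_gaussD_mul_inner [IsFiniteMeasure μ] (hh : 0 < h) (x v : Vec d) :
    ∫ u, gaussD d h u x * ⟪u - x, v⟫ ∂μ = h * ⟪∫ u, (gaussD d h u x / h) • (u - x) ∂μ, v⟫ := by
  simp_rw [gaussD_mul_inner_sub hh.ne', integral_const_mul,
    integral_inner (integrable_gaussD_div_smul_sub hh x), real_inner_comm]

lemma integrable_gaussD_mul_exp_inner [IsFiniteMeasure μ] (hh : 0 < h) (x v : Vec d) :
    Integrable (fun u => gaussD d h u x * exp ⟪u - x, v⟫) μ := by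
  simp_rw [gaussD_mul_exp_inner hh.ne']
  exact (integrable_gaussD hh.le _).mul_const _

lemma integral_gaussD_mul_exp_inner (hh : h ≠ 0) (x v : Vec d) :
    ∫ u, gaussD d h u x * exp ⟪u - x, v⟫ ∂μ = convD d μ h (x + h • v) * exp (h * ‖v‖ ^ 2 / 2) := by
  simp_rw [gaussD_mul_exp_inner hh, integral_mul_const, convD]

lemma exp_norm_scoreFn_sq_mul_convD_le [IsProbabilityMeasure μ] (hh : 0 < h) (x : Vec d) :
    exp (h * ‖scoreFn d (convD d μ h) x‖ ^ 2 / 2) * convD d μ h x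
      ≤ (2 * π * h) ^ (-(d : ℝ) / 2) := by
  set ρ := convD d μ h x
  set s := scoreFn d (convD d μ h) x
  have hρ : 0 < ρ := convD_pos hh x
  have hgrad : ∫ u, (gaussD d h u x / h) • (u - x) ∂μ = ρ • s := by
    rw [show s = _ from scoreFn_convD hh x, smul_inv_smul₀ hρ.ne']
  have hmoment : ∫ u, gaussD d h u x * ⟪u - x, s⟫ ∂μ = h * ‖s‖ ^ 2 * ρ := by
    rw [integral_gaussD_mul_inner hh, hgrad, real_inner_smul_left, real_inner_self_eq_norm_sq]
    ring
  have hjensen := exp_mul_integral_le_integral_mul_exp (gaussD_nonneg hh.le · x)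
    (integrable_gaussD hh.le x) (integrable_gaussD_mul_inner hh x s)
    (integrable_gaussD_mul_exp_inner hh x s) hmoment
  rw [integral_gaussD_mul_exp_inner hh.ne'] at hjensen
  refine le_of_mul_le_mul_right ?_ (exp_pos (h * ‖s‖ ^ 2 / 2))
  calc exp (h * ‖s‖ ^ 2 / 2) * ρ * exp (h * ‖s‖ ^ 2 / 2) = exp (h * ‖s‖ ^ 2) * ρ := by
        rw [mul_right_comm, ← exp_add, add_halves]
    _ ≤ convD d μ h (x + h • s) * exp (h * ‖s‖ ^ 2 / 2) := hjensen
    _ ≤ (2 * π * h) ^ (-(d : ℝ) / 2) * exp (h * ‖s‖ ^ 2 / 2) := by gcongr; exact convD_le hh.le _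

end Convolution

/-- Pointwise bound on the score of a Gaussian-smoothed distribution:
`‖s*_h(x)‖² ≤ (2/h) log(1/((2πh)^{d/2} ρ*_h(x)))`. -/
theorem smoothed_score_bound (d : ℕ) (μ : Measure (Vec d)) (h : ℝ)
    (hprob : IsProbabilityMeasure μ) (hh : 0 < h) :
    ∀ x : Vec d,
      ‖scoreFn d (convD d μ h) x‖ ^ 2
        ≤ (2 / h) * Real.log (1 / ((2 * π * h) ^ ((d : ℝ) / 2) * convD d μ h x)) := by
  intro x
  refine le_two_div_mul_log_of_exp_mul_le hh (convD_pos hh x) (by positivity) ?_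
  rw [← rpow_neg (by positivity), ← neg_div]
  exact exp_norm_scoreFn_sq_mul_convD_le hh x
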